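/- Suppose P ∈ [0,1). Let μ = Σ_{j=1}^{N} f_j · δ_{v_j} be a weak stationary solution of the δ model with 0 ≤ v_1 < v_2 < … < v_N ≤ V_max, f_j > 0 for every j, Σ_{j=1}^{N} f_j = ρ, and v_1 < V_max. Then necessarily P < 1/2 and the mass carried by the lowest velocity equals f_1 = ρ·(1−2P)/(1−P). -/

import Mathlib

/-!
Test the stationarity equation against a continuous `φ` with `φ = 1` at the lowest atom `v₁`
and `φ = 0` at every other atom and at every acceleration outcome `min (v_i + Δv) Vmax`
(all of which lie strictly above `v₁`). The acceleration term then disappears, and the braking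
term `min (v_i, v_j)` hits `v₁` exactly when one of the two partners sits at `v₁`, which happens
with mass `ρ² - (ρ - f₁)²`. Stationarity becomes `(1 - P) f₁ (2ρ - f₁) = ρ f₁`, i.e.
`(1 - P) f₁ = ρ (1 - 2P)`, and `f₁ > 0` forces `P < 1/2`.
-/

open MeasureTheory

/-- The δ-model transition kernel: for pre-interaction speeds `vs` (candidate) and
`vf` (field), the probability measure
`A_δ(vs,vf) = (1−P)·δ_{min(vs,vf)} + P·δ_{min(vs+Δv, Vmax)}`. -/
noncomputable def deltaKernel (Vmax Δv P : ℝ) (vs vf : ℝ) : Measure ℝ :=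
  ENNReal.ofReal (1 - P) • Measure.dirac (min vs vf)
    + ENNReal.ofReal P • Measure.dirac (min (vs + Δv) Vmax)

/-- `μ` is a weak stationary solution of the δ model: for every continuous test
function `φ`, `∫∫ (∫ φ dA_δ(v_*,v^*)) dμ(v_*) dμ(v^*) = ρ ∫ φ dμ`. -/
def IsWeakStationaryDelta (Vmax Δv ρ P : ℝ) (μ : Measure ℝ) : Prop :=
  ∀ φ : ℝ → ℝ, Continuous φ →
    (∫ vf, ∫ vs, (∫ v, φ v ∂(deltaKernel Vmax Δv P vs vf)) ∂μ ∂μ) = ρ * ∫ v, φ v ∂μ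

section WeightedDirac

variable {α E : Type*} [MeasurableSpace α] [MeasurableSingletonClass α]
  [NormedAddCommGroup E]

lemma integrable_smul_dirac (g : α → E) (w : ℝ) (x : α) :
    Integrable g (ENNReal.ofReal w • Measure.dirac x) :=
  (integrable_dirac enorm_lt_top).smul_measure ENNReal.ofReal_ne_top

lemma integral_smul_dirac [NormedSpace ℝ E] [CompleteSpace E] (g : α → E) {w : ℝ} (hw : 0 ≤ w)
    (x : α) :
    ∫ a, g a ∂(ENNReal.ofReal w • Measure.dirac x) = w • g x := by
  rw [integral_smul_measure, integral_dirac, ENNReal.toReal_ofReal hw]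

lemma integral_finsetSum_smul_dirac [NormedSpace ℝ E] [CompleteSpace E] {ι : Type*}
    (s : Finset ι) (g : α → E) {w : ι → ℝ} (hw : ∀ i ∈ s, 0 ≤ w i) (x : ι → α) :
    ∫ a, g a ∂(∑ i ∈ s, ENNReal.ofReal (w i) • Measure.dirac (x i))
      = ∑ i ∈ s, w i • g (x i) := by
  rw [integral_finsetSum_measure fun i _ => integrable_smul_dirac g (w i) (x i)]
  exact Finset.sum_congr rfl fun i hi => integral_smul_dirac g (hw i hi) (x i)

end WeightedDirac

lemma integral_deltaKernel {Vmax Δv P : ℝ} (hP0 : 0 ≤ P) (hP1 : P ≤ 1) (φ : ℝ → ℝ) (vs vf : ℝ) :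
    ∫ x, φ x ∂(deltaKernel Vmax Δv P vs vf)
      = (1 - P) * φ (min vs vf) + P * φ (min (vs + Δv) Vmax) := by
  rw [deltaKernel,
    integral_add_measure (integrable_smul_dirac _ _ _) (integrable_smul_dirac _ _ _),
    integral_smul_dirac _ (sub_nonneg.2 hP1), integral_smul_dirac _ hP0, smul_eq_mul, smul_eq_mul]

lemma isWeakStationaryDelta_sum_dirac_iff {Vmax Δv ρ P : ℝ} (hP0 : 0 ≤ P) (hP1 : P ≤ 1)
    {ι : Type*} [Fintype ι] (v : ι → ℝ) {f : ι → ℝ} (hf : ∀ j, 0 ≤ f j) :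
    IsWeakStationaryDelta Vmax Δv ρ P (∑ j, ENNReal.ofReal (f j) • Measure.dirac (v j)) ↔
      ∀ φ : ℝ → ℝ, Continuous φ →
        ∑ j, f j * ∑ i, f i * ((1 - P) * φ (min (v i) (v j)) + P * φ (min (v i + Δv) Vmax))
          = ρ * ∑ k, f k * φ (v k) := by
  simp only [IsWeakStationaryDelta, integral_deltaKernel hP0 hP1,
    integral_finsetSum_smul_dirac _ _ fun j _ => hf j, smul_eq_mul]

lemma sum_mul_sum_mul_ite_or {ι : Type*} [Fintype ι] [DecidableEq ι] (f : ι → ℝ) (c : ℝ)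
    (a : ι) :
    ∑ j, f j * ∑ i, f i * (c * if i = a ∨ j = a then 1 else 0)
      = c * f a * (2 * ∑ i, f i - f a) := by
  have h : ∀ i j : ι, (if i = a ∨ j = a then (1 : ℝ) else 0)
      = (if i = a then 1 else 0) + (if j = a then 1 else 0)
        - (if i = a then 1 else 0) * (if j = a then 1 else 0) := by
    intro i j; split_ifs <;> simp_all
  simp only [h, mul_sub, mul_add, Finset.sum_sub_distrib, Finset.sum_add_distrib]
  simp only [mul_ite, mul_one, mul_zero, Finset.sum_ite_eq', Finset.mem_univ, ↓reduceIte,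
    Finset.sum_ite_irrel, Finset.sum_const_zero, Finset.mul_sum]
  simp only [← Finset.sum_mul, ← Finset.mul_sum]
  ring

lemma exists_continuous_eq_one_of_notMem_finite {X : Type*} [TopologicalSpace X] [T1Space X]
    [NormalSpace X] {s : Set X} (hs : s.Finite) {x : X} (hx : x ∉ s) :
    ∃ φ : X → ℝ, Continuous φ ∧ φ x = 1 ∧ ∀ y ∈ s, φ y = 0 := by
  obtain ⟨φ, hφs, hφx, -⟩ := exists_continuous_zero_one_of_isClosed hs.isClosed isClosed_singleton
    (Set.disjoint_singleton_right.2 hx)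
  exact ⟨φ, φ.continuous, hφx rfl, hφs⟩

theorem IsWeakStationaryDelta.lowest_atom_eq {Vmax Δv ρ P : ℝ} (hΔ : 0 < Δv) (hP0 : 0 ≤ P)
    (hP1 : P ≤ 1) {ι : Type*} [Fintype ι] [DecidableEq ι] {v f : ι → ℝ} (hf : ∀ j, 0 ≤ f j)
    {a : ι} (hlow : ∀ k ≠ a, v a < v k) (hVmax : v a < Vmax)
    (hstat : IsWeakStationaryDelta Vmax Δv ρ P (∑ j, ENNReal.ofReal (f j) • Measure.dirac (v j))) :
    (1 - P) * f a * (2 * ∑ j, f j - f a) = ρ * f a := by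
  have hle : ∀ k, v a ≤ v k := fun k => by
    rcases eq_or_ne k a with rfl | hk
    exacts [le_rfl, (hlow k hk).le]
  obtain ⟨φ, hφ, hφa, hφ0⟩ := exists_continuous_eq_one_of_notMem_finite
    (s := Set.range (fun i => min (v i + Δv) Vmax) ∪ v '' {k | k ≠ a})
    ((Set.finite_range _).union (Set.toFinite _)) (by
      rintro (⟨i, hi⟩ | ⟨k, hk, hka⟩)
      · exact (lt_min (lt_add_of_le_of_pos (hle i) hΔ) hVmax).ne' hi
      · exact (hlow k hk).ne' hka)
  have hφv : ∀ k, φ (v k) = if k = a then 1 else 0 := fun k => by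
    split_ifs with hk
    exacts [hk ▸ hφa, hφ0 _ (Or.inr ⟨k, hk, rfl⟩)]
  have hφmin : ∀ i j, φ (min (v i) (v j)) = if i = a ∨ j = a then 1 else 0 := fun i j => by
    rcases eq_or_ne i a with rfl | hi
    · simp [min_eq_left (hle j), hφa]
    rcases eq_or_ne j a with rfl | hj
    · simp [min_eq_right (hle i), hφa]
    rcases min_choice (v i) (v j) with h | h <;> simp [h, hφv, hi, hj]
  have hφjump : ∀ i, φ (min (v i + Δv) Vmax) = 0 := fun i => hφ0 _ (Or.inl ⟨i, rfl⟩)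
  have key := (isWeakStationaryDelta_sum_dirac_iff hP0 hP1 v hf).1 hstat φ hφ
  simp only [hφv, hφmin, hφjump, mul_zero, add_zero] at key
  rw [sum_mul_sum_mul_ite_or] at key
  simpa only [mul_ite, mul_one, mul_zero, Finset.sum_ite_eq', Finset.mem_univ, if_true] using key

theorem statement4_general (Vmax Δv ρ P : ℝ)
    (hΔ : 0 < Δv) (hρ : 0 < ρ) (hP0 : 0 ≤ P) (hP1 : P < 1)
    (N : ℕ) (hN : 0 < N) (v f : Fin N → ℝ)
    (hmono : StrictMono v)
    (hv1 : v ⟨0, hN⟩ < Vmax)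
    (hf : ∀ j, 0 < f j) (hmass : ∑ j, f j = ρ)
    (hstat : IsWeakStationaryDelta Vmax Δv ρ P
      (∑ j, ENNReal.ofReal (f j) • Measure.dirac (v j))) :
    P < 1 / 2 ∧ f ⟨0, hN⟩ = ρ * (1 - 2 * P) / (1 - P) := by
  have hlow : ∀ k ≠ ⟨0, hN⟩, v ⟨0, hN⟩ < v k := fun k hk =>
    hmono (Fin.lt_def.2 (Nat.pos_of_ne_zero fun h => hk (Fin.ext h)))
  have key := hstat.lowest_atom_eq hΔ hP0 hP1.le (fun j => (hf j).le) hlow hv1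
  rw [hmass] at key
  have hf0 := hf ⟨0, hN⟩
  have hbalance : ρ * (1 - 2 * P) = (1 - P) * f ⟨0, hN⟩ := by
    apply mul_right_cancel₀ hf0.ne'
    linear_combination key
  have hpos : 0 < ρ * (1 - 2 * P) := hbalance ▸ mul_pos (sub_pos.2 hP1) hf0
  refine ⟨by linarith [pos_of_mul_pos_right hpos hρ.le], ?_⟩
  rw [eq_div_iff (sub_pos.2 hP1).ne']
  linarith

/-- Suppose `P ∈ [0,1)`.  If `μ = Σ_j f_j δ_{v_j}` is a weak stationary solution
of the δ model with `0 ≤ v_1 < v_2 < ⋯ < v_N ≤ Vmax`, `f_j > 0`, `Σ_j f_j = ρ`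
and `v_1 < Vmax`, then necessarily `P < 1/2` and the mass at the lowest velocity
equals `f_1 = ρ(1−2P)/(1−P)`. -/
theorem statement4 (Vmax Δv ρ P : ℝ)
    (hV : 0 < Vmax) (hΔ : 0 < Δv) (hρ : 0 < ρ) (hP0 : 0 ≤ P) (hP1 : P < 1)
    (N : ℕ) (hN : 0 < N) (v f : Fin N → ℝ)
    (hv0 : 0 ≤ v ⟨0, hN⟩) (hmono : StrictMono v) (hvle : ∀ j, v j ≤ Vmax)
    (hv1 : v ⟨0, hN⟩ < Vmax)
    (hf : ∀ j, 0 < f j) (hmass : ∑ j, f j = ρ)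
    (hstat : IsWeakStationaryDelta Vmax Δv ρ P
      (∑ j, ENNReal.ofReal (f j) • Measure.dirac (v j))) :
    P < 1 / 2 ∧ f ⟨0, hN⟩ = ρ * (1 - 2 * P) / (1 - P) :=
  statement4_general Vmax Δv ρ P hΔ hρ hP0 hP1 N hN v f hmono hv1 hf hmass hstat
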